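/- Let D be a sequence of potentially conflicting quadruples over a set of templates P admitting multi-tree bijectivity. If two variables X and Y occurring in the templates of D are connected in D, then X implies Y in D and Y implies X in D. Furthermore, if additionally type(X) = type(Y), then μ̄(X) = μ̄(Y) for every variable mapping μ̄ for D that is admissible for some database. -/

import Mathlib

/-- A relational schema: relation names and function names with a domain and a range.
Its schema graph is the directed multigraph with nodes the relation names and an edge
labelled `f` from `dom f` to `rng f` for every function name `f`. -/
structure Schema where
  Rel : Type
  Func : Type
  dom : Func → Rel
  rng : Func → Rel

/-- Directed paths in the schema graph: `IsPath S R F T` holds if `F` is the sequence of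
edge labels of a directed path from node `R` to node `T`. -/
inductive IsPath (S : Schema) : S.Rel → List S.Func → S.Rel → Prop
  | nil (R : S.Rel) : IsPath S R [] R
  | cons {R T : S.Rel} {f : S.Func} {F : List S.Func} :
      S.dom f = R → IsPath S (S.rng f) F T → IsPath S R (f :: F) T

/-- The schema graph restricted to the edges in `H` is a multi-tree: there is at most one
directed path (using only edges in `H`) between any two nodes. -/
def MultiTreeOn (S : Schema) (H : Set S.Func) : Prop :=
  ∀ (R T : S.Rel) (F F' : List S.Func),
    IsPath S R F T → IsPath S R F' T →
    (∀ f ∈ F, f ∈ H) → (∀ f ∈ F', f ∈ H) → F = F'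

/-- A disjoint partitioning of the function names into pairs `(f, pair f)` with inverse
domains and ranges, given as a fixed-point free involution. -/
structure Pairing (S : Schema) where
  pair : S.Func → S.Func
  pair_invol : ∀ f, pair (pair f) = f
  pair_ne : ∀ f, pair f ≠ f
  dom_pair : ∀ f, S.dom (pair f) = S.rng f
  rng_pair : ∀ f, S.rng (pair f) = S.dom f

/-- Every choice of one function name from each pair yields a multi-tree. -/
def Pairing.MultiTreeCond {S : Schema} (pr : Pairing S) : Prop :=
  ∀ H : Set S.Func, (∀ f, f ∈ H ↔ pr.pair f ∉ H) → MultiTreeOn S H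

/-- A transaction template: a sequence of operations over typed variables (with read and
write sets of attributes), together with equality constraints `X = f(Y)` (represented as
the triple `(X, f, Y) ∈ eqC`) and disequality constraints `X ≠ Y` ( `(X, Y) ∈ neqC` ). -/
structure Template (S : Schema) (Var Attr : Type) where
  varType : Var → S.Rel
  ops : List (Var × Finset Attr × Finset Attr)
  eqC : Set (Var × S.Func × Var)
  neqC : Set (Var × Var)
  eq_typed : ∀ c ∈ eqC, varType c.1 = S.rng c.2.1 ∧ varType c.2.2 = S.dom c.2.1
  neq_typed : ∀ c ∈ neqC, varType c.1 = varType c.2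

/-- Intra-template variable implication: `X ⇒^F_τ Y`, generated by `X ⇒^ε_τ X` and, for a
constraint `Y = f(Z)` of the template, `X ⇒^{F}_τ Z → X ⇒^{F·f}_τ Y`. -/
inductive Template.Implies {S : Schema} {Var Attr : Type}
    (τ : Template S Var Attr) : Var → List S.Func → Var → Prop
  | refl (X : Var) : Implies τ X [] X
  | step {X Z Y : Var} {F : List S.Func} {f : S.Func} :
      Implies τ X F Z → (Y, f, Z) ∈ τ.eqC → Implies τ X (F ++ [f]) Y

/-- The constraints of a template are closed under the inverse pairs:
`Y = f(X)` is a constraint iff `X = (pair f)(Y)` is. -/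
def Template.ClosedUnderPairing {S : Schema} {Var Attr : Type}
    (τ : Template S Var Attr) (pr : Pairing S) : Prop :=
  ∀ (X Y : Var) (f : S.Func), (Y, f, X) ∈ τ.eqC ↔ (X, pr.pair f, Y) ∈ τ.eqC

/-- Operations `o` of `τi` and `p` of `τj` are potentially conflicting: they are over
variables of the same type and their attribute sets intersect appropriately
(ww, wr, or rw). -/
def PotConf {S : Schema} {Var Attr : Type} [DecidableEq Attr]
    (τi τj : Template S Var Attr) (o p : Var × Finset Attr × Finset Attr) : Prop :=
  τi.varType o.1 = τj.varType p.1 ∧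
  ((o.2.2 ∩ p.2.2).Nonempty ∨ (o.2.2 ∩ p.2.1).Nonempty ∨ (o.2.1 ∩ p.2.2).Nonempty)

/-- A sequence of potentially conflicting quadruples `(τ_i, o_i, p_j, τ_j)` over an
indexed family of (variable-disjoint copies of) templates: a quadruple `(i, k, l, j)`
relates the `k`-th operation of `tmpl i` to the `l`-th operation of `tmpl j`, which must
be potentially conflicting. -/
structure PCSeq (S : Schema) (Var Attr : Type) [DecidableEq Attr] where
  m : ℕ
  tmpl : Fin m → Template S Var Attr
  quads : List (Fin m × ℕ × ℕ × Fin m)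
  wf : ∀ q ∈ quads, ∃ o p, (tmpl q.1).ops[q.2.1]? = some o ∧
      (tmpl q.2.2.2).ops[q.2.2.1]? = some p ∧ PotConf (tmpl q.1) (tmpl q.2.2.2) o p

namespace PCSeq

variable {S : Schema} {Var Attr : Type} [DecidableEq Attr]

/-- Cross-template variable implication `X ⇒^F_D Y` (variables are tagged with the index
of the template of `D` in which they occur). -/
inductive ImpliesD (D : PCSeq S Var Attr) :
    (Fin D.m × Var) → List S.Func → (Fin D.m × Var) → Prop
  | intra {i : Fin D.m} {X Y : Var} {F : List S.Func} :
      (D.tmpl i).Implies X F Y → ImpliesD D (i, X) F (i, Y)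
  | cross {q} {o p : Var × Finset Attr × Finset Attr} : q ∈ D.quads →
      (D.tmpl q.1).ops[q.2.1]? = some o →
      (D.tmpl q.2.2.2).ops[q.2.2.1]? = some p →
      ImpliesD D (q.1, o.1) [] (q.2.2.2, p.1)
  | cross' {q} {o p : Var × Finset Attr × Finset Attr} : q ∈ D.quads →
      (D.tmpl q.1).ops[q.2.1]? = some o →
      (D.tmpl q.2.2.2).ops[q.2.2.1]? = some p →
      ImpliesD D (q.2.2.2, p.1) [] (q.1, o.1)
  | trans {x z y F₁ F₂} :
      ImpliesD D x F₁ z → ImpliesD D z F₂ y → ImpliesD D x (F₁ ++ F₂) y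

/-- Connectedness of variables in `D`: `X ≈_D Y`. -/
inductive ConnD (D : PCSeq S Var Attr) : (Fin D.m × Var) → (Fin D.m × Var) → Prop
  | base {x y} : (∃ F, D.ImpliesD x F y) ∨ (∃ F, D.ImpliesD y F x) → ConnD D x y
  | ext {x z y} : ConnD D x z →
      (∃ F, D.ImpliesD z F y) ∨ (∃ F, D.ImpliesD y F z) → ConnD D x y

/-- `D` is over a set of templates admitting multi-tree bijectivity. -/
def MTB (D : PCSeq S Var Attr) (pr : Pairing S) : Prop :=
  pr.MultiTreeCond ∧ ∀ i, (D.tmpl i).ClosedUnderPairing pr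

/-- The type of a (tagged) variable occurrence. -/
def vt (D : PCSeq S Var Attr) (x : Fin D.m × Var) : S.Rel := (D.tmpl x.1).varType x.2

end PCSeq

/-- A database over a schema: typed tuples and an interpretation of the function names. -/
structure DB (S : Schema) (Tuple : Type) where
  typeOf : Tuple → S.Rel
  interp : S.Func → Tuple → Tuple
  interp_typed : ∀ f t, typeOf (interp f t) = S.rng f

/-- A variable assignment is admissible for a database when it is type preserving and
satisfies all equality and disequality constraints of the template. -/
def Template.Admissible {S : Schema} {Var Attr Tuple : Type}
    (τ : Template S Var Attr) (d : DB S Tuple) (μ : Var → Tuple) : Prop :=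
  (∀ X : Var, d.typeOf (μ X) = τ.varType X) ∧
  (∀ c ∈ τ.eqC, μ c.1 = d.interp c.2.1 (μ c.2.2)) ∧
  (∀ c ∈ τ.neqC, μ c.1 ≠ μ c.2)

/-- A variable mapping `μ̄` for a sequence of potentially conflicting quadruples `D`
(one variable assignment per template of `D`) is admissible for a database if every
assignment is admissible for its template and the variables of the operations of each
potentially conflicting quadruple are identified. -/
def PCSeq.AdmissibleMap {S : Schema} {Var Attr Tuple : Type} [DecidableEq Attr]
    (D : PCSeq S Var Attr) (d : DB S Tuple) (μ : Fin D.m → Var → Tuple) : Prop :=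
  (∀ i, (D.tmpl i).Admissible d (μ i)) ∧
  (∀ q ∈ D.quads, ∀ o p : Var × Finset Attr × Finset Attr,
    (D.tmpl q.1).ops[q.2.1]? = some o →
    (D.tmpl q.2.2.2).ops[q.2.2.1]? = some p →
    μ q.1 o.1 = μ q.2.2.2 p.1)

/-!
Closure of the templates under pairing makes every implication step reversible (`Y = f(Z)`
comes with `Z = (pair f)(Y)`), so `⇒_D` is symmetric and connectedness collapses to mutual
implication. An admissible mapping sends an implication `x ⇒^F_D y` to a walk of tuples along
`F` in which every step `f` is undone by `pair f`. A detour `g ⋯ pair g` can be cut out: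
its inner part starts and ends at the same type, hence (by induction on the length) at the
same tuple, which `pair g` sends back to the tuple before `g`. What remains uses at most one
function of each pair, so it traces a path from `type(x)` to `type(y) = type(x)` in a
multi-tree; it is empty, and `μ̄(x) = μ̄(y)`.
-/

variable {S : Schema} {Var Attr Tuple : Type}

theorem Pairing.exists_choice_superset (pr : Pairing S) (s : Set S.Func)
    (hs : ∀ f ∈ s, pr.pair f ∉ s) :
    ∃ H : Set S.Func, (∀ f, f ∈ H ↔ pr.pair f ∉ H) ∧ s ⊆ H := by
  -- outside `s` and its partners, keep the smaller member of each pair for a well-order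
  refine ⟨{f | f ∈ s ∨ (pr.pair f ∉ s ∧ WellOrderingRel f (pr.pair f))}, fun f => ?_,
    fun f hf => Or.inl hf⟩
  have hinv := pr.pair_invol f
  have hne := (pr.pair_ne f).symm
  have htri := trichotomous_of WellOrderingRel f (pr.pair f)
  have hasymm : WellOrderingRel f (pr.pair f) → ¬ WellOrderingRel (pr.pair f) f :=
    asymm_of _
  have hf := hs f
  have hpf := hs (pr.pair f)
  simp only [Set.mem_ofPred_eq, hinv] at hpf ⊢
  tauto

theorem Pairing.exists_eq_append_cons_append_pair (pr : Pairing S) {F : List S.Func}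
    {f : S.Func} (hf : f ∈ F) (hpf : pr.pair f ∈ F) :
    ∃ g A B C, F = A ++ g :: (B ++ pr.pair g :: C) := by
  obtain ⟨A, T, rfl⟩ := List.append_of_mem hf
  rcases List.mem_append.mp hpf with hA | hT
  · obtain ⟨A', C', rfl⟩ := List.append_of_mem hA
    exact ⟨pr.pair f, A', C', T, by simp [pr.pair_invol]⟩
  · rcases List.mem_cons.mp hT with he | hT'
    · exact absurd he (pr.pair_ne f)
    · obtain ⟨B, C, rfl⟩ := List.append_of_mem hT'
      exact ⟨f, A, B, C, rfl⟩

inductive DB.Walk (d : DB S Tuple) (pr : Pairing S) : Tuple → List S.Func → Tuple → Prop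
  | nil (t : Tuple) : Walk d pr t [] t
  | cons {t u s : Tuple} {f : S.Func} {F : List S.Func} :
      d.typeOf t = S.dom f → u = d.interp f t → t = d.interp (pr.pair f) u →
      Walk d pr u F s → Walk d pr t (f :: F) s

namespace DB.Walk

variable {d : DB S Tuple} {pr : Pairing S} {t s : Tuple} {F G : List S.Func}

theorem append {u : Tuple} (h₁ : d.Walk pr t F u) (h₂ : d.Walk pr u G s) :
    d.Walk pr t (F ++ G) s := by
  induction h₁ with
  | nil => exact h₂
  | cons hdom hfwd hbwd _ ih => exact .cons hdom hfwd hbwd (ih h₂)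

theorem exists_of_append (h : d.Walk pr t (F ++ G) s) :
    ∃ u, d.Walk pr t F u ∧ d.Walk pr u G s := by
  induction F generalizing t with
  | nil => exact ⟨t, .nil t, h⟩
  | cons f F ih =>
    cases h with
    | cons hdom hfwd hbwd h =>
      obtain ⟨u, h₁, h₂⟩ := ih h
      exact ⟨u, .cons hdom hfwd hbwd h₁, h₂⟩

theorem isPath (h : d.Walk pr t F s) : IsPath S (d.typeOf t) F (d.typeOf s) := by
  induction h with
  | nil => exact .nil _
  | @cons t u s f F hdom hfwd _ _ ih =>
    have hu : d.typeOf u = S.rng f := hfwd ▸ d.interp_typed f t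
    exact .cons hdom.symm (hu ▸ ih)

theorem shortcut {A B C : List S.Func} {g : S.Func}
    (hB : ∀ u v, d.Walk pr u B v → d.typeOf u = d.typeOf v → u = v)
    (h : d.Walk pr t (A ++ g :: (B ++ pr.pair g :: C)) s) : d.Walk pr t (A ++ C) s := by
  obtain ⟨t₁, hA, hrest⟩ := exists_of_append h
  obtain _ | ⟨hdom₁, hfwd₁, hbwd₁, hrest⟩ := hrest
  obtain ⟨s₁, hB', hrest⟩ := exists_of_append hrest
  obtain _ | ⟨hdom₂, hfwd₂, -, hC⟩ := hrest
  have hloop := hB _ _ hB' (by rw [hfwd₁, d.interp_typed, hdom₂, pr.dom_pair])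
  rw [hfwd₂, ← hloop, ← hbwd₁] at hC
  exact hA.append hC

theorem eq_of_typeOf_eq (hMT : pr.MultiTreeCond) (h : d.Walk pr t F s)
    (hty : d.typeOf t = d.typeOf s) : t = s := by
  induction hn : F.length using Nat.strong_induction_on generalizing F t s with
  | _ n ih =>
  by_cases hpair : ∃ f ∈ F, pr.pair f ∈ F
  · obtain ⟨f, hf, hpf⟩ := hpair
    obtain ⟨g, A, B, C, rfl⟩ := pr.exists_eq_append_cons_append_pair hf hpf
    simp only [List.length_append, List.length_cons] at hn
    have hB : ∀ u v, d.Walk pr u B v → d.typeOf u = d.typeOf v → u = v :=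
      fun u v hw hty => ih B.length (by omega) hw hty rfl
    exact ih (A ++ C).length (by simp only [List.length_append]; omega) (h.shortcut hB) hty rfl
  · push Not at hpair
    obtain ⟨H, hH, hFH⟩ := pr.exists_choice_superset {f | f ∈ F} hpair
    have hnil : F = [] := hMT H hH _ _ F [] (hty ▸ h.isPath) (.nil _) hFH (by simp)
    subst hnil
    cases h
    rfl

end DB.Walk

namespace Template

variable {τ : Template S Var Attr} {X Y Z : Var} {F G : List S.Func}

theorem Implies.append (h₁ : τ.Implies X F Y) (h₂ : τ.Implies Y G Z) :
    τ.Implies X (F ++ G) Z := by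
  induction h₂ with
  | refl => simpa using h₁
  | step _ hc ih => rw [← List.append_assoc]; exact .step ih hc

theorem Implies.reverse {pr : Pairing S} (hcl : τ.ClosedUnderPairing pr)
    (h : τ.Implies X F Y) : τ.Implies Y (F.map pr.pair).reverse X := by
  induction h with
  | refl => exact .refl _
  | @step Z Y F f _ hc ih =>
    have hback : τ.Implies Y ([] ++ [pr.pair f]) Z := .step (.refl Y) ((hcl Z Y f).mp hc)
    simpa using hback.append ih

theorem Implies.walk {pr : Pairing S} {d : DB S Tuple} {μ : Var → Tuple}
    (hcl : τ.ClosedUnderPairing pr) (hμ : τ.Admissible d μ) (h : τ.Implies X F Y) :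
    d.Walk pr (μ X) F (μ Y) := by
  induction h with
  | refl => exact .nil _
  | @step Z Y F f _ hc ih =>
    refine ih.append (.cons ?_ (hμ.2.1 _ hc) (hμ.2.1 _ ((hcl Z Y f).mp hc)) (.nil _))
    rw [hμ.1 Z]
    exact (τ.eq_typed _ hc).2

end Template

namespace PCSeq

variable [DecidableEq Attr] {D : PCSeq S Var Attr} {pr : Pairing S}
  {x y : Fin D.m × Var} {F : List S.Func}

theorem ImpliesD.reverse (hcl : ∀ i, (D.tmpl i).ClosedUnderPairing pr)
    (h : D.ImpliesD x F y) : D.ImpliesD y (F.map pr.pair).reverse x := by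
  induction h with
  | @intra i _ _ _ h => exact .intra (h.reverse (hcl i))
  | cross hq ho hp => exact .cross' hq ho hp
  | cross' hq ho hp => exact .cross hq ho hp
  | trans _ _ ih₁ ih₂ => simpa using ih₂.trans ih₁

theorem ImpliesD.walk {d : DB S Tuple} {μ : Fin D.m → Var → Tuple}
    (hcl : ∀ i, (D.tmpl i).ClosedUnderPairing pr) (hμ : D.AdmissibleMap d μ)
    (h : D.ImpliesD x F y) : d.Walk pr (μ x.1 x.2) F (μ y.1 y.2) := by
  induction h with
  | @intra i _ _ _ h => exact h.walk (hcl i) (hμ.1 i)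
  | cross hq ho hp => rw [hμ.2 _ hq _ _ ho hp]; exact .nil _
  | cross' hq ho hp => rw [← hμ.2 _ hq _ _ ho hp]; exact .nil _
  | trans _ _ ih₁ ih₂ => exact ih₁.append ih₂

theorem ConnD.exists_impliesD_and (hcl : ∀ i, (D.tmpl i).ClosedUnderPairing pr)
    (h : D.ConnD x y) : (∃ F, D.ImpliesD x F y) ∧ (∃ F, D.ImpliesD y F x) := by
  have hboth : ∀ {x y}, ((∃ F, D.ImpliesD x F y) ∨ ∃ F, D.ImpliesD y F x) →
      (∃ F, D.ImpliesD x F y) ∧ ∃ F, D.ImpliesD y F x := by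
    rintro x y (⟨F, h⟩ | ⟨F, h⟩)
    exacts [⟨⟨F, h⟩, _, h.reverse hcl⟩, ⟨⟨_, h.reverse hcl⟩, F, h⟩]
  induction h with
  | base h => exact hboth h
  | ext _ h ih =>
    obtain ⟨⟨_, hxz⟩, ⟨_, hzx⟩⟩ := ih
    obtain ⟨⟨_, hzy⟩, ⟨_, hyz⟩⟩ := hboth h
    exact ⟨⟨_, hxz.trans hzy⟩, ⟨_, hyz.trans hzx⟩⟩

end PCSeq

/-- Over templates admitting multi-tree bijectivity, connected variables
mutually imply each other; moreover connected variables of the same type are mapped to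
the same tuple by every admissible variable mapping. -/
theorem connD_implies_and_eq_of_admissible
    {S : Schema} {Var Attr : Type} [DecidableEq Attr]
    (D : PCSeq S Var Attr) (pr : Pairing S) (h : D.MTB pr)
    (x y : Fin D.m × Var) (hconn : D.ConnD x y) :
    ((∃ F, D.ImpliesD x F y) ∧ (∃ F, D.ImpliesD y F x)) ∧
    (D.vt x = D.vt y →
      ∀ (Tuple : Type) (d : DB S Tuple) (μ : Fin D.m → Var → Tuple),
        D.AdmissibleMap d μ → μ x.1 x.2 = μ y.1 y.2) := by
  have hboth := hconn.exists_impliesD_and h.2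
  refine ⟨hboth, fun hty Tuple d μ hμ => ?_⟩
  obtain ⟨F, hF⟩ := hboth.1
  refine (hF.walk h.2 hμ).eq_of_typeOf_eq h.1 ?_
  rw [(hμ.1 x.1).1 x.2, (hμ.1 y.1).1 y.2]
  exact hty
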